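/- arXiv:2312.06784 — 3 statements merged into one kernel-verified Lean document; each statement's English description precedes it below -/
import Mathlib

section
/- Let Q(ℓ,w) and Q̃(ℓ,w), 0 ≤ w ≤ ℓ, be two families of row-substochastic real 𝒥×𝒥 matrices, and let Π and Π̃ be the matrices produced by the recursion from Q and Q̃ respectively. Set C_0 = 0 and, for k ≥ 1, C_k = sup{ Σ_{j∈𝒥} |Q_{ij}(ℓ,w) − Q̃_{ij}(ℓ,w)| : 0 ≤ w ≤ ℓ ≤ k−1, i ∈ 𝒥 }. Then for every integer k ≥ 0, every subset S ⊆ {0,1,…,k}, and every i ∈ 𝒥, one has Σ_{k'∈S} Σ_{j∈𝒥} |Π_{ij}(k,k') − Π̃_{ij}(k,k')| ≤ k · C_k. -/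
open scoped BigOperators

noncomputable section

/-- The diagonal part of a matrix. -/
def diagPart {J : Type*} [DecidableEq J] (M : Matrix J J ℝ) : Matrix J J ℝ :=
  Matrix.of fun i j => if i = j then M i j else 0

/-- The off-diagonal part of a matrix. -/
def offdiagPart {J : Type*} [DecidableEq J] (M : Matrix J J ℝ) : Matrix J J ℝ :=
  M - diagPart M

/-- A matrix is row-substochastic if its entries are nonnegative and every row sum is ≤ 1. -/
def RowSubstochastic {J : Type*} [Fintype J] (M : Matrix J J ℝ) : Prop :=
  (∀ i j, 0 ≤ M i j) ∧ ∀ i, ∑ j, M i j ≤ 1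

/-- The matrices `Π(k,v)` produced by the recursion from the family `Q(ℓ,w)`:
`Π(0,0) = I`, `Π(k,v) = 0` for `v > k`,
`Π(k,0) = ∑_{k'=0}^{k-1} Π(k-1,k') Qⁿ(k-1,k')` for `k ≥ 1`, and
`Π(k,v) = Π(k-1,v-1) Q^d(k-1,v-1)` for `k ≥ v ≥ 1`. -/
def PiRec {J : Type*} [Fintype J] [DecidableEq J]
    (Q : ℕ → ℕ → Matrix J J ℝ) : ℕ → ℕ → Matrix J J ℝ
  | 0, v => if v = 0 then 1 else 0
  | (k+1), v =>
      if v = 0 then ∑ k' ∈ Finset.range (k+1), PiRec Q k k' * offdiagPart (Q k k')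
      else if v ≤ k + 1 then PiRec Q k (v-1) * diagPart (Q k (v-1)) else 0

/-- `C_k`: `C_0 = 0` and, for `k ≥ 1`,
`C_k = sup { ∑_j |Q_{ij}(ℓ,w) − Q̃_{ij}(ℓ,w)| : 0 ≤ w ≤ ℓ ≤ k−1, i ∈ 𝒥 }`
(the supremum of the empty set in `ℝ` being `0`). -/
def Cconst {J : Type*} [Fintype J] (Q Q' : ℕ → ℕ → Matrix J J ℝ) (k : ℕ) : ℝ :=
  sSup {x : ℝ | ∃ ℓ w, ∃ i : J, w ≤ ℓ ∧ ℓ < k ∧ x = ∑ j, |Q ℓ w i j - Q' ℓ w i j|}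

section Aux

set_option linter.unusedSectionVars false

variable {J : Type*} [Fintype J] [DecidableEq J]

lemma diagPart_apply (M : Matrix J J ℝ) (i j : J) :
    diagPart M i j = if i = j then M i j else 0 := rfl

lemma offdiagPart_apply (M : Matrix J J ℝ) (i j : J) :
    offdiagPart M i j = if i = j then 0 else M i j := by
  simp only [offdiagPart, Matrix.sub_apply, diagPart_apply]
  split <;> simp

lemma parts_add (M : Matrix J J ℝ) (i j : J) :
    diagPart M i j + offdiagPart M i j = M i j := by
  simp only [offdiagPart_apply, diagPart_apply]
  split <;> simp

lemma abs_parts (M M' : Matrix J J ℝ) (i j : J) :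
    |diagPart M i j - diagPart M' i j| + |offdiagPart M i j - offdiagPart M' i j|
      = |M i j - M' i j| := by
  simp only [offdiagPart_apply, diagPart_apply]
  split <;> simp

lemma diagPart_nonneg {M : Matrix J J ℝ} (h : ∀ i j, 0 ≤ M i j) (i j : J) :
    0 ≤ diagPart M i j := by
  rw [diagPart_apply]; split
  · exact h i j
  · exact le_refl 0

lemma offdiagPart_nonneg {M : Matrix J J ℝ} (h : ∀ i j, 0 ≤ M i j) (i j : J) :
    0 ≤ offdiagPart M i j := by
  rw [offdiagPart_apply]; split
  · exact le_refl 0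
  · exact h i j

lemma PiRec_zero (Q : ℕ → ℕ → Matrix J J ℝ) (k : ℕ) :
    PiRec Q (k+1) 0 = ∑ k' ∈ Finset.range (k+1), PiRec Q k k' * offdiagPart (Q k k') := by
  simp [PiRec]

lemma PiRec_succ (Q : ℕ → ℕ → Matrix J J ℝ) (k v : ℕ) (h : v ≤ k) :
    PiRec Q (k+1) (v+1) = PiRec Q k v * diagPart (Q k v) := by
  simp [PiRec, Nat.succ_le_succ h]

lemma PiRec_nonneg (Q : ℕ → ℕ → Matrix J J ℝ)
    (hQ : ∀ ℓ w, w ≤ ℓ → RowSubstochastic (Q ℓ w)) :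
    ∀ k v (i j : J), 0 ≤ PiRec Q k v i j := by
  intro k
  induction k with
  | zero =>
    intro v i j
    rcases v with _ | v
    · rw [show PiRec Q 0 0 = (1 : Matrix J J ℝ) from by simp [PiRec], Matrix.one_apply]
      split <;> norm_num
    · simp [PiRec]
  | succ k ih =>
    intro v i j
    rcases v with _ | v
    · rw [PiRec_zero, Matrix.sum_apply]
      refine Finset.sum_nonneg fun k' hk' => ?_
      rw [Matrix.mul_apply]
      refine Finset.sum_nonneg fun m _ => mul_nonneg (ih k' i m) ?_
      exact offdiagPart_nonneg (hQ k k' (Nat.lt_succ_iff.mp (Finset.mem_range.mp hk'))).1 m j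
    · by_cases hv : v ≤ k
      · rw [PiRec_succ Q k v hv, Matrix.mul_apply]
        refine Finset.sum_nonneg fun m _ => mul_nonneg (ih v i m) ?_
        exact diagPart_nonneg (hQ k v hv).1 m j
      · have : ¬ (v + 1 ≤ k + 1) := by omega
        simp [PiRec, this]

lemma rowSum_mul (A B : Matrix J J ℝ) (i : J) :
    ∑ j, (A * B) i j = ∑ m, A i m * ∑ j, B m j := by
  simp only [Matrix.mul_apply]
  rw [Finset.sum_comm]
  simp [Finset.mul_sum]

lemma PiRec_mass (Q : ℕ → ℕ → Matrix J J ℝ)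
    (hQ : ∀ ℓ w, w ≤ ℓ → RowSubstochastic (Q ℓ w)) :
    ∀ k (i : J), ∑ v ∈ Finset.range (k+1), ∑ j, PiRec Q k v i j ≤ 1 := by
  intro k
  induction k with
  | zero =>
    intro i
    simp [PiRec, Matrix.one_apply]
  | succ k ih =>
    intro i
    rw [Finset.sum_range_succ']
    have e1 : ∀ v ∈ Finset.range (k+1), ∑ j, PiRec Q (k+1) (v+1) i j
        = ∑ m, PiRec Q k v i m * ∑ j, diagPart (Q k v) m j := by
      intro v hv
      rw [PiRec_succ Q k v (Nat.lt_succ_iff.mp (Finset.mem_range.mp hv)), rowSum_mul]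
    have e0 : ∑ j, PiRec Q (k+1) 0 i j
        = ∑ v ∈ Finset.range (k+1), ∑ m, PiRec Q k v i m * ∑ j, offdiagPart (Q k v) m j := by
      rw [PiRec_zero]
      simp only [Matrix.sum_apply]
      rw [Finset.sum_comm]
      exact Finset.sum_congr rfl fun v _ => rowSum_mul _ _ _
    rw [Finset.sum_congr rfl e1, e0, ← Finset.sum_add_distrib]
    calc ∑ v ∈ Finset.range (k+1),
          ((∑ m, PiRec Q k v i m * ∑ j, diagPart (Q k v) m j)
            + ∑ m, PiRec Q k v i m * ∑ j, offdiagPart (Q k v) m j)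
        = ∑ v ∈ Finset.range (k+1), ∑ m, PiRec Q k v i m * ∑ j, Q k v m j := by
          refine Finset.sum_congr rfl fun v _ => ?_
          rw [← Finset.sum_add_distrib]
          refine Finset.sum_congr rfl fun m _ => ?_
          rw [← mul_add, ← Finset.sum_add_distrib]
          congr 1
          exact Finset.sum_congr rfl fun j _ => parts_add _ _ _
      _ ≤ ∑ v ∈ Finset.range (k+1), ∑ m, PiRec Q k v i m * 1 := by
          refine Finset.sum_le_sum fun v hv => Finset.sum_le_sum fun m _ => ?_
          have hvk : v ≤ k := Nat.lt_succ_iff.mp (Finset.mem_range.mp hv)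
          exact mul_le_mul_of_nonneg_left ((hQ k v hvk).2 m) (PiRec_nonneg Q hQ k v i m)
      _ ≤ 1 := by simpa using ih i

lemma Cconst_nonneg (Q Q' : ℕ → ℕ → Matrix J J ℝ) (k : ℕ) : 0 ≤ Cconst Q Q' k := by
  refine Real.sSup_nonneg ?_
  rintro x ⟨ℓ, w, i, _, _, rfl⟩
  positivity

lemma Cconst_bdd (Q Q' : ℕ → ℕ → Matrix J J ℝ)
    (hQ : ∀ ℓ w, w ≤ ℓ → RowSubstochastic (Q ℓ w))
    (hQ' : ∀ ℓ w, w ≤ ℓ → RowSubstochastic (Q' ℓ w)) (k : ℕ) :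
    BddAbove {x : ℝ | ∃ ℓ w, ∃ i : J, w ≤ ℓ ∧ ℓ < k ∧ x = ∑ j, |Q ℓ w i j - Q' ℓ w i j|} := by
  refine ⟨2, ?_⟩
  rintro x ⟨ℓ, w, i, hwℓ, hℓ, rfl⟩
  calc ∑ j, |Q ℓ w i j - Q' ℓ w i j| ≤ ∑ j, (Q ℓ w i j + Q' ℓ w i j) := by
        refine Finset.sum_le_sum fun j _ => ?_
        have h1 := (hQ ℓ w hwℓ).1 i j
        have h2 := (hQ' ℓ w hwℓ).1 i j
        rw [abs_sub_le_iff]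
        constructor <;> linarith
    _ = (∑ j, Q ℓ w i j) + ∑ j, Q' ℓ w i j := Finset.sum_add_distrib
    _ ≤ 2 := by
        have := (hQ ℓ w hwℓ).2 i
        have := (hQ' ℓ w hwℓ).2 i
        linarith

lemma le_Cconst {Q Q' : ℕ → ℕ → Matrix J J ℝ}
    (hQ : ∀ ℓ w, w ≤ ℓ → RowSubstochastic (Q ℓ w))
    (hQ' : ∀ ℓ w, w ≤ ℓ → RowSubstochastic (Q' ℓ w))
    {ℓ w k : ℕ} (h1 : w ≤ ℓ) (h2 : ℓ < k) (i : J) :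
    ∑ j, |Q ℓ w i j - Q' ℓ w i j| ≤ Cconst Q Q' k :=
  le_csSup (Cconst_bdd Q Q' hQ hQ' k) ⟨ℓ, w, i, h1, h2, rfl⟩

lemma Cconst_mono {Q Q' : ℕ → ℕ → Matrix J J ℝ}
    (hQ : ∀ ℓ w, w ≤ ℓ → RowSubstochastic (Q ℓ w))
    (hQ' : ∀ ℓ w, w ≤ ℓ → RowSubstochastic (Q' ℓ w))
    {k k' : ℕ} (h : k ≤ k') : Cconst Q Q' k ≤ Cconst Q Q' k' := by
  refine Real.sSup_le ?_ (Cconst_nonneg Q Q' k')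
  rintro x ⟨ℓ, w, i, h1, h2, rfl⟩
  exact le_Cconst hQ hQ' h1 (h2.trans_le h) i

lemma mul_diff_rowsum (A A' B B' : Matrix J J ℝ)
    (hA' : ∀ i j, 0 ≤ A' i j) (hB : ∀ i j, 0 ≤ B i j) (i : J) :
    ∑ j, |(A * B) i j - (A' * B') i j|
      ≤ (∑ m, |A i m - A' i m| * (∑ j, B m j))
        + ∑ m, A' i m * (∑ j, |B m j - B' m j|) := by
  have key : ∀ j, |(A * B) i j - (A' * B') i j|
      ≤ ∑ m, (|A i m - A' i m| * B m j + A' i m * |B m j - B' m j|) := by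
    intro j
    rw [Matrix.mul_apply, Matrix.mul_apply, ← Finset.sum_sub_distrib]
    refine (Finset.abs_sum_le_sum_abs _ _).trans (Finset.sum_le_sum fun m _ => ?_)
    have e : A i m * B m j - A' i m * B' m j
        = (A i m - A' i m) * B m j + A' i m * (B m j - B' m j) := by ring
    rw [e]
    refine (abs_add_le _ _).trans ?_
    rw [abs_mul, abs_mul, abs_of_nonneg (hB m j), abs_of_nonneg (hA' i m)]
  calc ∑ j, |(A * B) i j - (A' * B') i j|
      ≤ ∑ j, ∑ m, (|A i m - A' i m| * B m j + A' i m * |B m j - B' m j|) :=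
        Finset.sum_le_sum fun j _ => key j
    _ = (∑ m, |A i m - A' i m| * (∑ j, B m j))
        + ∑ m, A' i m * (∑ j, |B m j - B' m j|) := by
        rw [Finset.sum_comm]
        simp only [Finset.sum_add_distrib, ← Finset.mul_sum]

lemma main_bound (Q Q' : ℕ → ℕ → Matrix J J ℝ)
    (hQ : ∀ ℓ w, w ≤ ℓ → RowSubstochastic (Q ℓ w))
    (hQ' : ∀ ℓ w, w ≤ ℓ → RowSubstochastic (Q' ℓ w)) :
    ∀ k (i : J), ∑ v ∈ Finset.range (k+1), ∑ j, |PiRec Q k v i j - PiRec Q' k v i j|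
      ≤ k * Cconst Q Q' k := by
  intro k
  induction k with
  | zero =>
    intro i
    simp [PiRec]
  | succ k ih =>
    intro i
    rw [Finset.sum_range_succ']
    have h0 : ∑ j, |PiRec Q (k+1) 0 i j - PiRec Q' (k+1) 0 i j|
        ≤ ∑ v ∈ Finset.range (k+1),
            ((∑ m, |PiRec Q k v i m - PiRec Q' k v i m| * (∑ j, offdiagPart (Q k v) m j))
             + ∑ m, PiRec Q' k v i m
                * (∑ j, |offdiagPart (Q k v) m j - offdiagPart (Q' k v) m j|)) := by
      rw [PiRec_zero, PiRec_zero]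
      have step1 : ∑ j, |(∑ v ∈ Finset.range (k+1), PiRec Q k v * offdiagPart (Q k v)) i j
            - (∑ v ∈ Finset.range (k+1), PiRec Q' k v * offdiagPart (Q' k v)) i j|
          ≤ ∑ v ∈ Finset.range (k+1),
              ∑ j, |(PiRec Q k v * offdiagPart (Q k v)) i j
                - (PiRec Q' k v * offdiagPart (Q' k v)) i j| := by
        rw [Finset.sum_comm]
        refine Finset.sum_le_sum fun j _ => ?_
        simp only [Matrix.sum_apply]
        rw [← Finset.sum_sub_distrib]
        exact Finset.abs_sum_le_sum_abs _ _
      refine step1.trans (Finset.sum_le_sum fun v hv => ?_)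
      have hvk : v ≤ k := Nat.lt_succ_iff.mp (Finset.mem_range.mp hv)
      exact mul_diff_rowsum _ _ _ _ (PiRec_nonneg Q' hQ' k v)
        (offdiagPart_nonneg (hQ k v hvk).1) i
    have hsum : ∑ v ∈ Finset.range (k+1),
          ∑ j, |PiRec Q (k+1) (v+1) i j - PiRec Q' (k+1) (v+1) i j|
        ≤ ∑ v ∈ Finset.range (k+1),
            ((∑ m, |PiRec Q k v i m - PiRec Q' k v i m| * (∑ j, diagPart (Q k v) m j))
             + ∑ m, PiRec Q' k v i m
                * (∑ j, |diagPart (Q k v) m j - diagPart (Q' k v) m j|)) := by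
      refine Finset.sum_le_sum fun v hv => ?_
      have hvk : v ≤ k := Nat.lt_succ_iff.mp (Finset.mem_range.mp hv)
      rw [PiRec_succ Q k v hvk, PiRec_succ Q' k v hvk]
      exact mul_diff_rowsum _ _ _ _ (PiRec_nonneg Q' hQ' k v)
        (diagPart_nonneg (hQ k v hvk).1) i
    calc (∑ v ∈ Finset.range (k+1),
            ∑ j, |PiRec Q (k+1) (v+1) i j - PiRec Q' (k+1) (v+1) i j|)
          + ∑ j, |PiRec Q (k+1) 0 i j - PiRec Q' (k+1) 0 i j|
        ≤ ∑ v ∈ Finset.range (k+1),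
            (((∑ m, |PiRec Q k v i m - PiRec Q' k v i m| * (∑ j, diagPart (Q k v) m j))
              + ∑ m, PiRec Q' k v i m
                  * (∑ j, |diagPart (Q k v) m j - diagPart (Q' k v) m j|))
             + ((∑ m, |PiRec Q k v i m - PiRec Q' k v i m| * (∑ j, offdiagPart (Q k v) m j))
              + ∑ m, PiRec Q' k v i m
                  * (∑ j, |offdiagPart (Q k v) m j - offdiagPart (Q' k v) m j|))) := by
          rw [Finset.sum_add_distrib]
          exact add_le_add hsum h0
      _ ≤ ∑ v ∈ Finset.range (k+1),
            ((∑ m, |PiRec Q k v i m - PiRec Q' k v i m|)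
             + (∑ m, PiRec Q' k v i m) * Cconst Q Q' (k+1)) := by
          refine Finset.sum_le_sum fun v hv => ?_
          have hvk : v ≤ k := Nat.lt_succ_iff.mp (Finset.mem_range.mp hv)
          have hD : (∑ m, |PiRec Q k v i m - PiRec Q' k v i m| * (∑ j, diagPart (Q k v) m j))
              + (∑ m, |PiRec Q k v i m - PiRec Q' k v i m| * (∑ j, offdiagPart (Q k v) m j))
              ≤ ∑ m, |PiRec Q k v i m - PiRec Q' k v i m| := by
            rw [← Finset.sum_add_distrib]
            refine Finset.sum_le_sum fun m _ => ?_
            rw [← mul_add, ← Finset.sum_add_distrib]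
            have hq : ∑ j, (diagPart (Q k v) m j + offdiagPart (Q k v) m j)
                = ∑ j, Q k v m j :=
              Finset.sum_congr rfl fun j _ => parts_add _ _ _
            rw [hq]
            calc |PiRec Q k v i m - PiRec Q' k v i m| * (∑ j, Q k v m j)
                ≤ |PiRec Q k v i m - PiRec Q' k v i m| * 1 :=
                  mul_le_mul_of_nonneg_left ((hQ k v hvk).2 m) (abs_nonneg _)
              _ = |PiRec Q k v i m - PiRec Q' k v i m| := mul_one _
          have hE : (∑ m, PiRec Q' k v i m
                * (∑ j, |diagPart (Q k v) m j - diagPart (Q' k v) m j|))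
              + (∑ m, PiRec Q' k v i m
                * (∑ j, |offdiagPart (Q k v) m j - offdiagPart (Q' k v) m j|))
              ≤ (∑ m, PiRec Q' k v i m) * Cconst Q Q' (k+1) := by
            rw [← Finset.sum_add_distrib, Finset.sum_mul]
            refine Finset.sum_le_sum fun m _ => ?_
            rw [← mul_add, ← Finset.sum_add_distrib]
            have hq : ∑ j, (|diagPart (Q k v) m j - diagPart (Q' k v) m j|
                  + |offdiagPart (Q k v) m j - offdiagPart (Q' k v) m j|)
                = ∑ j, |Q k v m j - Q' k v m j| :=
              Finset.sum_congr rfl fun j _ => abs_parts _ _ _ _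
            rw [hq]
            exact mul_le_mul_of_nonneg_left
              (le_Cconst hQ hQ' hvk (Nat.lt_succ_self k) m)
              (PiRec_nonneg Q' hQ' k v i m)
          linarith
      _ ≤ (k : ℝ) * Cconst Q Q' k + 1 * Cconst Q Q' (k+1) := by
          rw [Finset.sum_add_distrib]
          refine add_le_add (ih i) ?_
          rw [← Finset.sum_mul]
          exact mul_le_mul_of_nonneg_right
            (by simpa using PiRec_mass Q' hQ' k i)
            (Cconst_nonneg Q Q' (k+1))
      _ ≤ ((k : ℕ) + 1 : ℕ) * Cconst Q Q' (k+1) := by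
          have h1 := Cconst_mono hQ hQ' (Nat.le_succ k)
          have h2 := Cconst_nonneg Q Q' k
          push_cast
          nlinarith [Nat.cast_nonneg (α := ℝ) k]

end Aux

theorem comparison_lemma_for_Pi_recursion
    {J : Type*} [Fintype J] [DecidableEq J] [Nonempty J]
    (Q Q' : ℕ → ℕ → Matrix J J ℝ)
    (hQ : ∀ ℓ w, w ≤ ℓ → RowSubstochastic (Q ℓ w))
    (hQ' : ∀ ℓ w, w ≤ ℓ → RowSubstochastic (Q' ℓ w))
    (k : ℕ) (S : Finset ℕ) (hS : S ⊆ Finset.range (k+1)) (i : J) :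
    ∑ k' ∈ S, ∑ j, |PiRec Q k k' i j - PiRec Q' k k' i j| ≤ k * Cconst Q Q' k := by
  calc ∑ k' ∈ S, ∑ j, |PiRec Q k k' i j - PiRec Q' k k' i j|
      ≤ ∑ k' ∈ Finset.range (k+1), ∑ j, |PiRec Q k k' i j - PiRec Q' k k' i j| :=
        Finset.sum_le_sum_of_subset_of_nonneg hS fun v _ _ =>
          Finset.sum_nonneg fun j _ => abs_nonneg _
    _ ≤ k * Cconst Q Q' k := main_bound Q Q' hQ hQ' k i

end
end

section
/- (Theorem on convergence of the atomic parts of the transition probabilities.) For every q > 1 and every ε > 0 there exists a constant α(q,ε) > 0 such that for every s ≥ 0 and every γ ≥ γ₀, P( sup_{i∈𝒥} Σ_{j∈𝒥} |p^{a,(γ)}_{ij}(s) − p̃^{a,(γ)}_{ij}(s)| ≥ (s+1) α(q,ε) (log γ) γ^{−1/2+ε/2} ) = o(γ^{−q}) as γ → ∞. -/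
open scoped BigOperators

noncomputable section

/-- A matrix is row-stochastic if its entries are nonnegative and every row sum equals 1. -/
def RowStochastic {J : Type*} [Fintype J] (M : Matrix J J ℝ) : Prop :=
  (∀ i j, 0 ≤ M i j) ∧ ∀ i, ∑ j, M i j = 1

/-- `Poi_λ(k) = e^{−λ} λ^k / k!`. -/
def Poi (lam : ℝ) (k : ℕ) : ℝ := Real.exp (-lam) * lam ^ k / (Nat.factorial k)

/-- `Erl_{k,γ}(x) = γ (γx)^{k−1} e^{−γx} / (k−1)!` (intended for `k ≥ 1`). -/
def Erl (k : ℕ) (γ x : ℝ) : ℝ :=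
  γ * (γ * x) ^ (k - 1) * Real.exp (-(γ * x)) / (Nat.factorial (k - 1))

/-- Atomic part of the approximate transition probabilities:
`p^a_{ij}(s) = 1_{i=j} ∑_{ℓ≥0} Poi_{γs}(ℓ) Π_{ii}(ℓ,ℓ)`. -/
def pAtom {J : Type*} [Fintype J] [DecidableEq J] (γ : ℝ)
    (Pi : ℕ → ℕ → Matrix J J ℝ) (s : ℝ) (i j : J) : ℝ :=
  (if i = j then 1 else 0) * ∑' ℓ : ℕ, Poi (γ * s) ℓ * Pi ℓ ℓ i i

/-- Absolutely continuous part of the approximate transition probabilities: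
`p^c_{ij}(s,v) = ∑_{ℓ≥1} ∑_{w=0}^{ℓ−1} Erl_{ℓ−w,γ}(s−v) Poi_{γv}(w) Π_{ij}(ℓ,w)`. -/
def pCont {J : Type*} [Fintype J] (γ : ℝ)
    (Pi : ℕ → ℕ → Matrix J J ℝ) (s v : ℝ) (i j : J) : ℝ :=
  ∑' ℓ : ℕ, ∑ w ∈ Finset.range ℓ, Erl (ℓ - w) γ (s - v) * Poi (γ * v) w * Pi ℓ w i j


open MeasureTheory ProbabilityTheory Filter Asymptotics

/-!
Only the diagonal products `∏_{m<ℓ} Q_{ii}(m,m)` enter the atomic parts, and their factors lie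
in `[0,1]`, so the two atomic parts differ by at most
`∑_ℓ Poi_{γs}(ℓ) ∑_{m<ℓ} |Q_{ii}(m,m) − Q̃_{ii}(m,m)|`. By the Lipschitz condition the `m`-th
factors differ by at most `2Kγ⁻² |E_1 + ⋯ + E_{m+1} − (m+1)|`. Truncating the Poisson sum at
`M = ⌈2(s+1)γ⌉` (the tail is at most `exp((e−1)γs − M) ≤ exp(−2γ)` by a Chernoff bound), the
difference is `O(K(s+1)γ^{-1/2+ε/2}) + exp(−2γ)`, below the threshold once `log γ` is large,
unless some partial sum `E_1 + ⋯ + E_m`, `m ≤ M`, deviates from `m` by at least `γ^{1/2+ε/2}`.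
A Chernoff bound with `θ = γ^{-1/2}` and a union bound give this event probability
`O(γ exp(−γ^{ε/2}))`, which is `o(γ^{-q})` for every `q`.
-/

open Finset Real

theorem abs_prod_sub_prod_le_sum_abs_sub (a b : ℕ → ℝ) (ha : ∀ m, |a m| ≤ 1)
    (hb : ∀ m, |b m| ≤ 1) (n : ℕ) :
    |∏ m ∈ range n, a m - ∏ m ∈ range n, b m| ≤ ∑ m ∈ range n, |a m - b m| := by
  induction n with
  | zero => simp
  | succ n ih =>
    have hprod : |∏ m ∈ range n, b m| ≤ 1 := by
      rw [abs_prod]; exact prod_le_one (fun m _ => abs_nonneg _) fun m _ => hb m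
    rw [prod_range_succ, prod_range_succ, sum_range_succ]
    calc |(∏ m ∈ range n, a m) * a n - (∏ m ∈ range n, b m) * b n|
        = |(∏ m ∈ range n, a m - ∏ m ∈ range n, b m) * a n
            + (∏ m ∈ range n, b m) * (a n - b n)| := by ring_nf
      _ ≤ |∏ m ∈ range n, a m - ∏ m ∈ range n, b m| * 1 + 1 * |a n - b n| := by
        refine (abs_add_le _ _).trans ?_
        rw [abs_mul, abs_mul]
        exact add_le_add (mul_le_mul_of_nonneg_left (ha n) (abs_nonneg _))
          (mul_le_mul_of_nonneg_right hprod (abs_nonneg _))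
      _ ≤ _ := by linarith

theorem poi_nonneg {lam : ℝ} (hlam : 0 ≤ lam) (k : ℕ) : 0 ≤ Poi lam k := by
  unfold Poi; positivity

theorem hasSum_poi_mul_pow (lam c : ℝ) :
    HasSum (fun k => Poi lam k * c ^ k) (exp ((c - 1) * lam)) := by
  have h (k : ℕ) : Poi lam k * c ^ k = exp (-lam) * ((lam * c) ^ k / k.factorial) := by
    rw [Poi, mul_pow]; ring
  rw [funext h, show (c - 1) * lam = -lam + lam * c by ring, exp_add, exp_eq_exp_ℝ]
  exact (NormedSpace.expSeries_div_hasSum_exp (lam * c)).mul_left _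

theorem abs_tsum_poi_mul_le {lam u : ℝ} (hlam : 0 ≤ lam) (hu : 0 ≤ u) (M : ℕ) {c : ℕ → ℝ}
    (hc : ∀ ℓ, |c ℓ| ≤ 1) (hcM : ∀ ℓ < M, |c ℓ| ≤ u) :
    |∑' ℓ, Poi lam ℓ * c ℓ| ≤ u + exp ((exp 1 - 1) * lam - M) := by
  -- on the tail `M ≤ ℓ` we use the Chernoff weight `1 ≤ e ^ (ℓ - M)`
  have hmajor : HasSum (fun ℓ => Poi lam ℓ * (u + exp (-M) * exp 1 ^ ℓ))
      (u + exp ((exp 1 - 1) * lam - M)) := by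
    have h := ((hasSum_poi_mul_pow lam 1).mul_left u).add
      ((hasSum_poi_mul_pow lam (exp 1)).mul_left (exp (-M)))
    rw [sub_self, zero_mul, exp_zero, mul_one, ← exp_add, neg_add_eq_sub] at h
    exact h.congr_fun fun ℓ => by ring
  rw [← Real.norm_eq_abs]
  refine tsum_of_norm_bounded hmajor fun ℓ => ?_
  rw [Real.norm_eq_abs, abs_mul, abs_of_nonneg (poi_nonneg hlam ℓ)]
  refine mul_le_mul_of_nonneg_left ?_ (poi_nonneg hlam ℓ)
  rcases lt_or_ge ℓ M with h | h
  · exact (hcM ℓ h).trans (le_add_of_nonneg_right (by positivity))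
  · refine (hc ℓ).trans (le_add_of_nonneg_of_le hu ?_)
    rw [exp_one_pow, ← exp_add]
    exact one_le_exp (by linarith [(Nat.cast_le.mpr h : (M : ℝ) ≤ ℓ)])

theorem abs_tsum_poi_mul_prod_sub_le {lam δ : ℝ} (hlam : 0 ≤ lam) (hδ : 0 ≤ δ) (M : ℕ)
    {a b : ℕ → ℝ} (ha : ∀ m, a m ∈ Set.Icc 0 1) (hb : ∀ m, b m ∈ Set.Icc 0 1)
    (hab : ∀ m < M, |a m - b m| ≤ δ) :
    |∑' ℓ, Poi lam ℓ * ∏ m ∈ range ℓ, a m - ∑' ℓ, Poi lam ℓ * ∏ m ∈ range ℓ, b m|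
      ≤ M * δ + exp ((exp 1 - 1) * lam - M) := by
  have hprod (x : ℕ → ℝ) (hx : ∀ m, x m ∈ Set.Icc 0 1) (ℓ : ℕ) :
      ∏ m ∈ range ℓ, x m ∈ Set.Icc 0 1 :=
    ⟨prod_nonneg fun m _ => (hx m).1, prod_le_one (fun m _ => (hx m).1) fun m _ => (hx m).2⟩
  have hsummable (x : ℕ → ℝ) (hx : ∀ m, x m ∈ Set.Icc 0 1) :
      Summable fun ℓ => Poi lam ℓ * ∏ m ∈ range ℓ, x m :=
    (hasSum_poi_mul_pow lam 1).summable.of_nonneg_of_le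
      (fun ℓ => mul_nonneg (poi_nonneg hlam ℓ) (hprod x hx ℓ).1)
      fun ℓ => by simpa using mul_le_mul_of_nonneg_left (hprod x hx ℓ).2 (poi_nonneg hlam ℓ)
  have habs (m : ℕ) : |a m| ≤ 1 := abs_le.mpr ⟨by linarith [(ha m).1], (ha m).2⟩
  have hbbs (m : ℕ) : |b m| ≤ 1 := abs_le.mpr ⟨by linarith [(hb m).1], (hb m).2⟩
  rw [← (hsummable a ha).tsum_sub (hsummable b hb)]
  simp_rw [← mul_sub]
  refine abs_tsum_poi_mul_le hlam (by positivity) M (fun ℓ => ?_) fun ℓ hℓ => ?_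
  · exact abs_sub_le_of_nonneg_of_le (hprod a ha ℓ).1 (hprod a ha ℓ).2
      (hprod b hb ℓ).1 (hprod b hb ℓ).2
  · calc |∏ m ∈ range ℓ, a m - ∏ m ∈ range ℓ, b m|
        ≤ ∑ m ∈ range ℓ, |a m - b m| := abs_prod_sub_prod_le_sum_abs_sub a b habs hbbs ℓ
      _ ≤ ∑ m ∈ range ℓ, δ := sum_le_sum fun m hm => hab m ((mem_range.mp hm).trans hℓ)
      _ ≤ M * δ := by
        rw [sum_const, card_range, nsmul_eq_mul]
        exact mul_le_mul_of_nonneg_right (by exact_mod_cast hℓ.le) hδ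

section Matrices

variable {J : Type*} [Fintype J] [DecidableEq J]

theorem PiRec_self_apply_self (Q : ℕ → ℕ → Matrix J J ℝ) (k : ℕ) (i : J) :
    PiRec Q k k i i = ∏ m ∈ range k, Q m m i i := by
  induction k with
  | zero => simp [PiRec]
  | succ k ih =>
    rw [PiRec, if_neg k.succ_ne_zero, if_pos le_rfl, Nat.add_sub_cancel, Matrix.mul_apply,
      sum_eq_single i (fun j _ hj => by simp [diagPart, hj]) (by simp),
      prod_range_succ, ih]
    simp [diagPart]

theorem pAtom_apply_of_ne (γ : ℝ) (Pi : ℕ → ℕ → Matrix J J ℝ) (s : ℝ) {i j : J} (h : i ≠ j) :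
    pAtom γ Pi s i j = 0 := by
  simp [pAtom, h]

theorem sum_abs_pAtom_sub (γ : ℝ) (Pi Pi' : ℕ → ℕ → Matrix J J ℝ) (s : ℝ) (i : J) :
    ∑ j, |pAtom γ Pi s i j - pAtom γ Pi' s i j| =
      |∑' ℓ, Poi (γ * s) ℓ * Pi ℓ ℓ i i - ∑' ℓ, Poi (γ * s) ℓ * Pi' ℓ ℓ i i| := by
  rw [sum_eq_single i (fun j _ hj => by simp [pAtom_apply_of_ne, Ne.symm hj]) (by simp)]
  simp [pAtom]

theorem one_add_inv_mul_diag_mem_Icc {L : Matrix J J ℝ} {γ : ℝ} (hγ : 0 < γ) {i : J}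
    (hoff : ∀ j, i ≠ j → 0 ≤ L i j) (hrow : ∑ j, L i j = 0) (hdiag : |L i i| ≤ γ) :
    1 + γ⁻¹ * L i i ∈ Set.Icc 0 1 := by
  have hnonpos : L i i ≤ 0 := by
    rw [← add_sum_erase _ _ (mem_univ i)] at hrow
    linarith [sum_nonneg fun j (hj : j ∈ univ.erase i) => hoff j (Ne.symm (ne_of_mem_erase hj))]
  have hle : -1 ≤ γ⁻¹ * L i i := by
    rw [neg_le, ← mul_neg, inv_mul_le_one₀ hγ]
    linarith [neg_abs_le (L i i)]
  constructor <;> nlinarith [inv_pos.mpr hγ]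

/-- `Q^{(γ)}(ℓ,w)` along a sequence of interarrival times `e`; `e n` plays the role of
`E_{n+1}`, so that `∑ n ∈ range ℓ, e n = γ χ_ℓ`. -/
def sampleQ (Λ : ℝ → ℝ → Matrix J J ℝ) (γ : ℝ) (e : ℕ → ℝ) : ℕ → ℕ → Matrix J J ℝ :=
  fun ℓ w => 1 + γ⁻¹ • Λ ((∑ n ∈ range (ℓ + 1), e n) / γ)
    ((∑ n ∈ range (ℓ + 1), e n) / γ - (∑ n ∈ range (ℓ - w), e n) / γ)

def gridQ (Λ : ℝ → ℝ → Matrix J J ℝ) (γ : ℝ) : ℕ → ℕ → Matrix J J ℝ :=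
  fun ℓ w => 1 + γ⁻¹ • Λ (((ℓ : ℝ) + 1) / γ) (((w : ℝ) + 1) / γ)

theorem sup'_sum_abs_pAtom_sampleQ_sub_gridQ_le [Nonempty J]
    {Λ : ℝ → ℝ → Matrix J J ℝ} {K γ₀ γ s t : ℝ} {M : ℕ} {e : ℕ → ℝ} (hK : 0 ≤ K)
    (hLip : ∀ s₁ s₂ v₁ v₂ : ℝ, 0 ≤ s₁ → 0 ≤ s₂ → 0 ≤ v₁ → 0 ≤ v₂ →
      ∀ i : J, ∑ j, |Λ s₁ v₁ i j - Λ s₂ v₂ i j| ≤ K * (|s₁ - s₂| + |v₁ - v₂|))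
    (hoffdiag : ∀ s v : ℝ, 0 ≤ s → 0 ≤ v → ∀ i j : J, i ≠ j → 0 ≤ Λ s v i j)
    (hrowzero : ∀ s v : ℝ, 0 ≤ s → 0 ≤ v → ∀ i : J, ∑ j, Λ s v i j = 0)
    (hdiagbdd : ∀ s v : ℝ, 0 ≤ s → 0 ≤ v → ∀ i : J, |Λ s v i i| ≤ γ₀)
    (hγ : 0 < γ) (hγ₀ : γ₀ ≤ γ) (hs : 0 ≤ s) (ht : 0 ≤ t) (he : ∀ n, 0 ≤ e n)
    (hclose : ∀ m < M, |∑ n ∈ range (m + 1), e n - (m + 1)| ≤ t) :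
    univ.sup' univ_nonempty (fun i => ∑ j,
        |pAtom γ (PiRec (sampleQ Λ γ e)) s i j - pAtom γ (PiRec (gridQ Λ γ)) s i j|)
      ≤ M * (2 * K * t / γ ^ 2) + exp ((exp 1 - 1) * (γ * s) - M) := by
  refine sup'_le _ _ fun i _ => ?_
  set χ : ℕ → ℝ := fun m => (∑ n ∈ range (m + 1), e n) / γ
  set y : ℕ → ℝ := fun m => ((m : ℝ) + 1) / γ
  have hχ (m : ℕ) : 0 ≤ χ m := div_nonneg (sum_nonneg fun n _ => he n) hγ.le
  have hy (m : ℕ) : 0 ≤ y m := by positivity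
  have hdiag (x : ℝ) (hx : 0 ≤ x) : 1 + γ⁻¹ * Λ x x i i ∈ Set.Icc 0 1 :=
    one_add_inv_mul_diag_mem_Icc hγ (hoffdiag x x hx hx i) (hrowzero x x hx hx i)
      ((hdiagbdd x x hx hx i).trans hγ₀)
  have hsample (m : ℕ) : sampleQ Λ γ e m m i i = 1 + γ⁻¹ * Λ (χ m) (χ m) i i := by
    simp [sampleQ, χ]
  have hgrid (m : ℕ) : gridQ Λ γ m m i i = 1 + γ⁻¹ * Λ (y m) (y m) i i := by
    simp [gridQ, y]
  rw [sum_abs_pAtom_sub]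
  simp only [PiRec_self_apply_self, hsample, hgrid]
  refine abs_tsum_poi_mul_prod_sub_le (by positivity) (by positivity) M
    (fun m => hdiag _ (hχ m)) (fun m => hdiag _ (hy m)) fun m hm => ?_
  have hχy : |χ m - y m| ≤ t / γ := by
    rw [← sub_div, abs_div, abs_of_pos hγ]
    exact div_le_div_of_nonneg_right (hclose m hm) hγ.le
  calc |1 + γ⁻¹ * Λ (χ m) (χ m) i i - (1 + γ⁻¹ * Λ (y m) (y m) i i)|
      = γ⁻¹ * |Λ (χ m) (χ m) i i - Λ (y m) (y m) i i| := by
        rw [add_sub_add_left_eq_sub, ← mul_sub, abs_mul, abs_of_pos (inv_pos.mpr hγ)]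
    _ ≤ γ⁻¹ * (K * (|χ m - y m| + |χ m - y m|)) := by
        gcongr
        exact (single_le_sum (f := fun j => |Λ (χ m) (χ m) i j - Λ (y m) (y m) i j|)
          (fun j _ => abs_nonneg _) (mem_univ i)).trans
          (hLip _ _ _ _ (hχ m) (hy m) (hχ m) (hy m) i)
    _ ≤ γ⁻¹ * (K * (t / γ + t / γ)) := by gcongr
    _ = 2 * K * t / γ ^ 2 := by field_simp; ring

end Matrices

section Exponential

open scoped ENNReal

theorem expMeasure_one_eq_withDensity :
    expMeasure 1 =
      (volume.restrict (Set.Ici 0)).withDensity fun x => ((exp (-x)).toNNReal : ℝ≥0∞) := by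
  rw [← withDensity_indicator measurableSet_Ici]
  show volume.withDensity (exponentialPDF 1) = _
  congr 1
  ext x
  by_cases hx : 0 ≤ x <;> simp [exponentialPDF_eq, hx, ENNReal.ofReal]

theorem toNNReal_exp_neg_smul_exp_mul (c x : ℝ) :
    (exp (-x)).toNNReal • exp (c * x) = exp ((c - 1) * x) := by
  rw [NNReal.smul_def, Real.coe_toNNReal _ (exp_pos _).le, smul_eq_mul, ← exp_add]
  ring_nf

theorem integrable_exp_mul_expMeasure_one {c : ℝ} (hc : c < 1) :
    Integrable (fun x => exp (c * x)) (expMeasure 1) := by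
  rw [expMeasure_one_eq_withDensity, integrable_withDensity_iff_integrable_smul (by fun_prop)]
  simp_rw [toNNReal_exp_neg_smul_exp_mul]
  exact Iff.mpr integrableOn_Ici_iff_integrableOn_Ioi (integrableOn_exp_mul_Ioi (by linarith) 0)

theorem integral_exp_mul_expMeasure_one {c : ℝ} (hc : c < 1) :
    ∫ x, exp (c * x) ∂(expMeasure 1) = (1 - c)⁻¹ := by
  rw [expMeasure_one_eq_withDensity, integral_withDensity_eq_integral_smul (by fun_prop)]
  simp_rw [toNNReal_exp_neg_smul_exp_mul]
  rw [integral_Ici_eq_integral_Ioi, integral_exp_mul_Ioi (by linarith) 0, mul_zero, exp_zero,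
    neg_div, one_div, neg_inv, neg_sub]

variable {Ω : Type*} [MeasurableSpace Ω] {P : Measure Ω} {X : Ω → ℝ}

theorem ae_nonneg_of_map_eq_expMeasure_one (hX : Measurable X) (hmap : P.map X = expMeasure 1) :
    ∀ᵐ ω ∂P, 0 ≤ X ω := by
  refine ae_of_ae_map hX.aemeasurable ?_
  rw [hmap, expMeasure_one_eq_withDensity]
  exact (withDensity_absolutelyContinuous _ _).ae_le (ae_restrict_mem measurableSet_Ici)

theorem integrable_exp_mul_of_map_eq_expMeasure_one (hX : Measurable X)
    (hmap : P.map X = expMeasure 1) {c : ℝ} (hc : c < 1) :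
    Integrable (fun ω => exp (c * X ω)) P := by
  have h := integrable_exp_mul_expMeasure_one hc
  rw [← hmap] at h
  exact h.comp_measurable hX

theorem mgf_of_map_eq_expMeasure_one (hX : Measurable X) (hmap : P.map X = expMeasure 1)
    {c : ℝ} (hc : c < 1) : mgf X P c = (1 - c)⁻¹ := by
  rw [← mgf_id_map hX.aemeasurable, hmap, mgf]
  exact integral_exp_mul_expMeasure_one hc

end Exponential

theorem inv_one_sub_le_exp {θ : ℝ} (hθ : |θ| ≤ 1 / 5) : (1 - θ)⁻¹ ≤ exp (θ + 2 * θ ^ 2) := by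
  obtain ⟨h₁, h₂⟩ := abs_le.mp hθ
  have hx : |-(θ + 2 * θ ^ 2)| ≤ 1 := by rw [abs_le]; constructor <;> nlinarith
  have h := (abs_le.mp (abs_exp_sub_one_sub_id_le hx)).2
  have hsq : (θ + 2 * θ ^ 2) ^ 2 ≤ 2 * θ ^ 2 := by
    have : (1 + 2 * θ) ^ 2 ≤ 2 := by nlinarith
    nlinarith [mul_le_mul_of_nonneg_left this (sq_nonneg θ)]
  rw [inv_le_comm₀ (by linarith) (exp_pos _), ← exp_neg]
  nlinarith

section Chernoff

variable {Ω : Type*} [MeasurableSpace Ω] {P : Measure Ω} {E : ℕ → Ω → ℝ}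

theorem mgf_sum_range_le_of_expMeasure_one (hEmeas : ∀ i, Measurable (E i))
    (hEindep : iIndepFun E P) (hEexp : ∀ i, P.map (E i) = expMeasure 1) (m : ℕ) {c : ℝ}
    (hc : |c| ≤ 1 / 5) :
    mgf (∑ i ∈ range m, E i) P c ≤ exp ((c + 2 * c ^ 2) * m) := by
  have hc₁ : c < 1 := by linarith [(abs_le.mp hc).2]
  rw [hEindep.mgf_sum hEmeas, prod_congr rfl fun i _ =>
    mgf_of_map_eq_expMeasure_one (hEmeas i) (hEexp i) hc₁, prod_const, card_range, mul_comm,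
    exp_nat_mul]
  exact pow_le_pow_left₀ (inv_nonneg.mpr (by linarith)) (inv_one_sub_le_exp hc) m

theorem measureReal_abs_sum_range_sub_ge_le [IsProbabilityMeasure P]
    (hEmeas : ∀ i, Measurable (E i)) (hEindep : iIndepFun E P)
    (hEexp : ∀ i, P.map (E i) = expMeasure 1) (m : ℕ) {θ : ℝ}
    (hθ₀ : 0 ≤ θ) (hθ : θ ≤ 1 / 5) (t : ℝ) :
    P.real {ω | t ≤ |∑ i ∈ range m, E i ω - m|} ≤ 2 * exp (2 * θ ^ 2 * m - θ * t) := by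
  set S := ∑ i ∈ range m, E i
  have hS (ω : Ω) : S ω = ∑ i ∈ range m, E i ω := sum_apply ω _ E
  have hint {c : ℝ} (hc : |c| ≤ 1 / 5) : Integrable (fun ω => exp (c * S ω)) P :=
    hEindep.integrable_exp_mul_sum hEmeas fun i _ => integrable_exp_mul_of_map_eq_expMeasure_one
      (hEmeas i) (hEexp i) (by linarith [(abs_le.mp hc).2])
  have hθabs : |θ| ≤ 1 / 5 := by rwa [abs_of_nonneg hθ₀]
  have hnegθabs : |-θ| ≤ 1 / 5 := by rwa [abs_neg]
  have hupper : P.real {ω | m + t ≤ S ω} ≤ exp (2 * θ ^ 2 * m - θ * t) := by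
    refine (measure_ge_le_exp_mul_mgf _ hθ₀ (hint hθabs)).trans ?_
    calc exp (-θ * (m + t)) * mgf S P θ ≤ exp (-θ * (m + t)) * exp ((θ + 2 * θ ^ 2) * m) := by
          gcongr
          exact mgf_sum_range_le_of_expMeasure_one hEmeas hEindep hEexp m hθabs
      _ = exp (2 * θ ^ 2 * m - θ * t) := by rw [← exp_add]; ring_nf
  have hlower : P.real {ω | S ω ≤ m - t} ≤ exp (2 * θ ^ 2 * m - θ * t) := by
    refine (measure_le_le_exp_mul_mgf _ (by linarith) (hint hnegθabs)).trans ?_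
    calc exp (-(-θ) * (m - t)) * mgf S P (-θ)
        ≤ exp (-(-θ) * (m - t)) * exp ((-θ + 2 * (-θ) ^ 2) * m) := by
          gcongr
          exact mgf_sum_range_le_of_expMeasure_one hEmeas hEindep hEexp m hnegθabs
      _ = exp (2 * θ ^ 2 * m - θ * t) := by rw [← exp_add]; ring_nf
  calc P.real {ω | t ≤ |∑ i ∈ range m, E i ω - m|}
      ≤ P.real ({ω | m + t ≤ S ω} ∪ {ω | S ω ≤ m - t}) := by
        refine measureReal_mono fun ω hω => ?_
        simp only [Set.mem_ofPred_eq, Set.mem_union, hS] at hω ⊢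
        rcases le_abs'.mp hω with h | h
        · right; linarith
        · left; linarith
    _ ≤ P.real {ω | m + t ≤ S ω} + P.real {ω | S ω ≤ m - t} := measureReal_union_le _ _
    _ ≤ 2 * exp (2 * θ ^ 2 * m - θ * t) := by linarith

theorem measureReal_exists_abs_sum_range_sub_ge_le [IsProbabilityMeasure P]
    (hEmeas : ∀ i, Measurable (E i)) (hEindep : iIndepFun E P)
    (hEexp : ∀ i, P.map (E i) = expMeasure 1) (M : ℕ) {θ : ℝ}
    (hθ₀ : 0 ≤ θ) (hθ : θ ≤ 1 / 5) (t : ℝ) :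
    P.real {ω | ∃ m < M, t ≤ |∑ n ∈ range (m + 1), E n ω - (m + 1)|}
      ≤ 2 * M * exp (2 * θ ^ 2 * M - θ * t) := by
  have hset : {ω | ∃ m < M, t ≤ |∑ n ∈ range (m + 1), E n ω - (m + 1)|} =
      ⋃ m ∈ range M, {ω | t ≤ |∑ n ∈ range (m + 1), E n ω - ((m + 1 : ℕ) : ℝ)|} := by
    ext ω; simp
  rw [hset]
  refine (measureReal_biUnion_finset_le _ _).trans ?_
  calc ∑ m ∈ range M, P.real {ω | t ≤ |∑ n ∈ range (m + 1), E n ω - ((m + 1 : ℕ) : ℝ)|}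
      ≤ ∑ m ∈ range M, 2 * exp (2 * θ ^ 2 * M - θ * t) := by
        refine sum_le_sum fun m hm => (measureReal_abs_sum_range_sub_ge_le hEmeas hEindep hEexp
          (m + 1) hθ₀ hθ t).trans ?_
        gcongr
        exact_mod_cast mem_range.mp hm
    _ = 2 * M * exp (2 * θ ^ 2 * M - θ * t) := by
        rw [sum_const, card_range, nsmul_eq_mul]; ring

theorem measureReal_exists_abs_sum_range_sub_ge_rpow_le [IsProbabilityMeasure P]
    (hEmeas : ∀ i, Measurable (E i)) (hEindep : iIndepFun E P)
    (hEexp : ∀ i, P.map (E i) = expMeasure 1) {γ C ε : ℝ} {M : ℕ}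
    (hγ : 25 ≤ γ) (hM : (M : ℝ) ≤ C * γ) :
    P.real {ω | ∃ m < M, γ ^ ((1 : ℝ) / 2 + ε / 2) ≤ |∑ n ∈ range (m + 1), E n ω - (m + 1)|}
      ≤ 2 * C * exp (2 * C) * (γ * exp (-γ ^ (ε / 2))) := by
  have hγ₀ : 0 < γ := by linarith
  have hθ : (√γ)⁻¹ ≤ 1 / 5 := by
    rw [one_div]
    exact inv_anti₀ (by norm_num) (Real.le_sqrt_of_sq_le (by linarith))
  have hθsq : (√γ)⁻¹ ^ 2 = γ⁻¹ := by rw [inv_pow, sq_sqrt hγ₀.le]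
  have hθt : (√γ)⁻¹ * γ ^ ((1 : ℝ) / 2 + ε / 2) = γ ^ (ε / 2) := by
    rw [sqrt_eq_rpow, ← rpow_neg hγ₀.le, ← rpow_add hγ₀]; ring_nf
  have hC : 0 ≤ C := (mul_nonneg_iff_of_pos_right hγ₀).mp ((Nat.cast_nonneg M).trans hM)
  have hMγ : γ⁻¹ * M ≤ C := by rw [inv_mul_le_iff₀ hγ₀]; linarith
  refine (measureReal_exists_abs_sum_range_sub_ge_le hEmeas hEindep hEexp M (by positivity) hθ
    _).trans ?_
  rw [hθsq, hθt]
  calc 2 * M * exp (2 * γ⁻¹ * M - γ ^ (ε / 2)) ≤ 2 * (C * γ) * exp (2 * C - γ ^ (ε / 2)) :=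
        mul_le_mul (by linarith) (exp_le_exp.mpr (by linarith)) (exp_pos _).le (by positivity)
    _ = 2 * C * exp (2 * C) * (γ * exp (-γ ^ (ε / 2))) := by
        rw [sub_eq_add_neg, exp_add]; ring

end Chernoff

theorem natCeil_two_mul_le_three_mul {s γ : ℝ} (hs : 0 ≤ s) (hγ : 1 ≤ γ) :
    (⌈2 * (s + 1) * γ⌉₊ : ℝ) ≤ 3 * (s + 1) * γ := by
  have := Nat.ceil_lt_add_one (by positivity : (0 : ℝ) ≤ 2 * (s + 1) * γ)
  nlinarith

theorem eventually_natCeil_mul_add_exp_lt_log_mul_rpow {K s ε α : ℝ} (hK : 0 ≤ K) (hs : 0 ≤ s)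
    (hα : 0 < α) :
    ∀ᶠ γ in atTop, (⌈2 * (s + 1) * γ⌉₊ : ℝ) * (2 * K * γ ^ ((1 : ℝ) / 2 + ε / 2) / γ ^ 2)
        + exp ((exp 1 - 1) * (γ * s) - ⌈2 * (s + 1) * γ⌉₊)
      < (s + 1) * α * log γ * γ ^ (-(1 : ℝ) / 2 + ε / 2) := by
  filter_upwards [eventually_ge_atTop 1, tendsto_log_atTop.eventually_ge_atTop ((6 * K + 1) / α),
    (isLittleO_exp_neg_mul_rpow_atTop two_pos (-(1 : ℝ) / 2 + ε / 2)).bound one_half_pos]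
    with γ hγ hlog htail
  set M := ⌈2 * (s + 1) * γ⌉₊
  set r := γ ^ (-(1 : ℝ) / 2 + ε / 2)
  have hγ₀ : 0 < γ := by linarith
  have hr : 0 < r := rpow_pos_of_pos hγ₀ _
  have ht : γ ^ ((1 : ℝ) / 2 + ε / 2) = r * γ := by rw [← rpow_add_one hγ₀.ne']; ring_nf
  have hdet : (M : ℝ) * (2 * K * γ ^ ((1 : ℝ) / 2 + ε / 2) / γ ^ 2) ≤ 6 * K * (s + 1) * r := by
    rw [ht, show 2 * K * (r * γ) / γ ^ 2 = 2 * K * r / γ by field_simp]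
    calc (M : ℝ) * (2 * K * r / γ) ≤ 3 * (s + 1) * γ * (2 * K * r / γ) := by
          gcongr; exact natCeil_two_mul_le_three_mul hs hγ
      _ = 6 * K * (s + 1) * r := by field_simp; ring
  have hexp : exp ((exp 1 - 1) * (γ * s) - M) ≤ exp (-2 * γ) := by
    gcongr
    have he : exp 1 - 1 ≤ 2 := by linarith [exp_one_lt_d9]
    nlinarith [Nat.le_ceil (2 * (s + 1) * γ),
      mul_le_mul_of_nonneg_right he (by positivity : 0 ≤ γ * s)]
  rw [norm_of_nonneg (exp_pos _).le, norm_of_nonneg hr.le] at htail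
  have hαlog : (6 * K + 1) * ((s + 1) * r) ≤ α * log γ * ((s + 1) * r) :=
    mul_le_mul_of_nonneg_right (by rwa [div_le_iff₀' hα] at hlog) (by positivity)
  nlinarith

theorem isLittleO_mul_exp_neg_rpow {δ : ℝ} (hδ : 0 < δ) (q : ℝ) :
    (fun γ : ℝ => γ * exp (-γ ^ δ)) =o[atTop] fun γ => γ ^ (-q) := by
  have hpow : ∀ᶠ γ : ℝ in atTop, (γ ^ δ) ^ (-(q + 1) / δ) = γ ^ (-(q + 1)) := by
    filter_upwards [eventually_ge_atTop 0] with γ hγ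
    rw [← rpow_mul hγ]; congr 1; field_simp
  have h : (fun γ : ℝ => exp (-γ ^ δ)) =o[atTop] fun γ => γ ^ (-(q + 1)) :=
    ((isLittleO_exp_neg_mul_rpow_atTop one_pos _).comp_tendsto (tendsto_rpow_atTop hδ)).congr'
      (Eventually.of_forall fun γ => by simp) hpow
  refine ((isBigO_refl (fun γ : ℝ => γ) atTop).mul_isLittleO h).congr' EventuallyEq.rfl ?_
  filter_upwards [eventually_gt_atTop 0] with γ hγ
  rw [show -q = -(q + 1) + 1 by ring, rpow_add_one hγ.ne', mul_comm]

theorem atomic_transition_probabilities_littleO_general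
    {Ω : Type*} [MeasurableSpace Ω] (P : Measure Ω) [IsProbabilityMeasure P]
    {J : Type*} [Fintype J] [DecidableEq J] [Nonempty J]
    (Λ : ℝ → ℝ → Matrix J J ℝ) (K : ℝ) (hK : 0 ≤ K)
    (hLip : ∀ s₁ s₂ v₁ v₂ : ℝ, 0 ≤ s₁ → 0 ≤ s₂ → 0 ≤ v₁ → 0 ≤ v₂ →
      ∀ i : J, ∑ j, |Λ s₁ v₁ i j - Λ s₂ v₂ i j| ≤ K * (|s₁ - s₂| + |v₁ - v₂|))
    -- each Λ(s,v) is an intensity matrix, with diagonal entries bounded by γ₀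
    (γ₀ : ℝ)
    (hoffdiag : ∀ s v : ℝ, 0 ≤ s → 0 ≤ v → ∀ i j : J, i ≠ j → 0 ≤ Λ s v i j)
    (hrowzero : ∀ s v : ℝ, 0 ≤ s → 0 ≤ v → ∀ i : J, ∑ j, Λ s v i j = 0)
    (hdiagbdd : ∀ s v : ℝ, 0 ≤ s → 0 ≤ v → ∀ i : J, |Λ s v i i| ≤ γ₀)
    -- (E_i) is an i.i.d. sequence of rate-one exponential random variables
    (E : ℕ → Ω → ℝ) (hEmeas : ∀ i, Measurable (E i))
    (hEindep : iIndepFun E P)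
    (hEexp : ∀ i, P.map (E i) = expMeasure 1)
    (q ε : ℝ) (hε : 0 < ε) :
    ∃ α : ℝ, 0 < α ∧ ∀ s : ℝ, 0 ≤ s →
      (fun γ : ℝ =>
        (P {ω |
          (s + 1) * α * Real.log γ * γ ^ (-(1:ℝ)/2 + ε/2) ≤
            Finset.univ.sup' Finset.univ_nonempty (fun i : J =>
              ∑ j,
                |pAtom γ (PiRec
                    -- the random matrices Q^{(γ)}(ℓ,w), built from the arrival
                    -- times χ^{(γ)}_ℓ = (E_1 + ⋯ + E_ℓ)/γ
                    (fun ℓ w => 1 + γ⁻¹ •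
                      Λ ((∑ i' ∈ Finset.range (ℓ+1), E i' ω) / γ)
                        ((∑ i' ∈ Finset.range (ℓ+1), E i' ω) / γ -
                          (∑ i' ∈ Finset.range (ℓ-w), E i' ω) / γ))) s i j -
                  pAtom γ (PiRec
                    -- the deterministic matrices Q̃^{(γ)}(ℓ,w)
                    (fun ℓ w => 1 + γ⁻¹ • Λ (((ℓ:ℝ)+1)/γ) (((w:ℝ)+1)/γ))) s i j|)
          }).toReal)
      =o[atTop] fun γ : ℝ => γ ^ (-q) := by
  refine ⟨1, one_pos, fun s hs => ?_⟩
  refine (IsBigO.of_bound' ?_).trans_isLittleO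
    ((isLittleO_mul_exp_neg_rpow (half_pos hε) q).const_mul_left
      (2 * (3 * (s + 1)) * exp (2 * (3 * (s + 1)))))
  filter_upwards [eventually_ge_atTop γ₀, eventually_ge_atTop 25,
    eventually_natCeil_mul_add_exp_lt_log_mul_rpow (ε := ε) hK hs one_pos] with γ hγ₀ hγ hpath
  rw [norm_of_nonneg ENNReal.toReal_nonneg, norm_of_nonneg (by positivity)]
  refine (ENNReal.toReal_mono (measure_ne_top _ _) (measure_mono_ae ?_)).trans
    (measureReal_exists_abs_sum_range_sub_ge_rpow_le hEmeas hEindep hEexp hγ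
      (natCeil_two_mul_le_three_mul hs (by linarith)))
  filter_upwards [ae_all_iff.mpr fun n => ae_nonneg_of_map_eq_expMeasure_one (hEmeas n) (hEexp n)]
    with ω hω (hthr : _ ≤ _)
  show ∃ m < _, _
  by_contra! hbad
  exact (hthr.trans (sup'_sum_abs_pAtom_sampleQ_sub_gridQ_le hK hLip hoffdiag hrowzero hdiagbdd
    (by linarith) hγ₀ hs (by positivity) hω fun m hm => (hbad m hm).le)).not_gt hpath

theorem atomic_transition_probabilities_littleO
    {Ω : Type*} [MeasurableSpace Ω] (P : Measure Ω) [IsProbabilityMeasure P]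
    {J : Type*} [Fintype J] [DecidableEq J] [Nonempty J]
    (Λ : ℝ → ℝ → Matrix J J ℝ) (K : ℝ) (hK : 0 ≤ K)
    (hLip : ∀ s₁ s₂ v₁ v₂ : ℝ, 0 ≤ s₁ → 0 ≤ s₂ → 0 ≤ v₁ → 0 ≤ v₂ →
      ∀ i : J, ∑ j, |Λ s₁ v₁ i j - Λ s₂ v₂ i j| ≤ K * (|s₁ - s₂| + |v₁ - v₂|))
    -- each Λ(s,v) is an intensity matrix, with diagonal entries bounded by γ₀
    (γ₀ : ℝ) (hγ₀ : 0 < γ₀)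
    (hoffdiag : ∀ s v : ℝ, 0 ≤ s → 0 ≤ v → ∀ i j : J, i ≠ j → 0 ≤ Λ s v i j)
    (hrowzero : ∀ s v : ℝ, 0 ≤ s → 0 ≤ v → ∀ i : J, ∑ j, Λ s v i j = 0)
    (hdiagbdd : ∀ s v : ℝ, 0 ≤ s → 0 ≤ v → ∀ i : J, |Λ s v i i| ≤ γ₀)
    -- (E_i) is an i.i.d. sequence of rate-one exponential random variables
    (E : ℕ → Ω → ℝ) (hEmeas : ∀ i, Measurable (E i))
    (hEindep : iIndepFun E P)
    (hEexp : ∀ i, P.map (E i) = expMeasure 1)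
    (q ε : ℝ) (hq : 1 < q) (hε : 0 < ε) :
    ∃ α : ℝ, 0 < α ∧ ∀ s : ℝ, 0 ≤ s →
      (fun γ : ℝ =>
        (P {ω |
          (s + 1) * α * Real.log γ * γ ^ (-(1:ℝ)/2 + ε/2) ≤
            Finset.univ.sup' Finset.univ_nonempty (fun i : J =>
              ∑ j,
                |pAtom γ (PiRec
                    -- the random matrices Q^{(γ)}(ℓ,w), built from the arrival
                    -- times χ^{(γ)}_ℓ = (E_1 + ⋯ + E_ℓ)/γ
                    (fun ℓ w => 1 + γ⁻¹ •
                      Λ ((∑ i' ∈ Finset.range (ℓ+1), E i' ω) / γ)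
                        ((∑ i' ∈ Finset.range (ℓ+1), E i' ω) / γ -
                          (∑ i' ∈ Finset.range (ℓ-w), E i' ω) / γ))) s i j -
                  pAtom γ (PiRec
                    -- the deterministic matrices Q̃^{(γ)}(ℓ,w)
                    (fun ℓ w => 1 + γ⁻¹ • Λ (((ℓ:ℝ)+1)/γ) (((w:ℝ)+1)/γ))) s i j|)
          }).toReal)
      =o[atTop] fun γ : ℝ => γ ^ (-q) :=
  atomic_transition_probabilities_littleO_general P Λ K hK hLip γ₀ hoffdiag hrowzero hdiagbdd E
    hEmeas hEindep hEexp q ε hε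
end
end

section
/- Let (E_i)_{i≥1} and (F_i)_{i≥1} be two independent i.i.d. sequences of exponential random variables with rate 1, and for γ > 0 set χ^{(γ)}_ℓ = (E_1 + ⋯ + E_ℓ)/γ and θ^{(γ)}_ℓ = (F_1 + ⋯ + F_ℓ)/γ (so these are distributed as the arrival times of two independent Poisson processes with intensity γ). Then for every q > 0 and every ε > 0 there exists a constant α > 0 (depending only on q and ε) such that P( max_{1 ≤ ℓ ≤ ⌊γ^{1+ε}⌋} |χ^{(γ)}_ℓ − θ^{(γ)}_ℓ| ≥ α (log γ) γ^{−1/2+ε/2} ) = o(γ^{−q}) as γ → ∞. -/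
/-!
Write `S_ℓ = Σ_{i<ℓ} (E_i - F_i)`. Since `E_i - F_i` has moment generating function
`(1 - t²)⁻¹ ≤ exp (2t²)` for `t² ≤ 1/2`, Chernoff's bound in both directions gives
`P(|S_ℓ| ≥ c) ≤ 2 exp (-tc + 2t²ℓ)`, and a union bound over `ℓ ≤ N = ⌊γ^{1+ε}⌋` costs a
factor `N + 1`. With `u = γ^{(1+ε)/2}`, `c = log γ · u` (the threshold for `α = 1`, scaled
by `γ`) and `t = log γ / (4u)` one has `tc = (log γ)²/4` and `2t²N ≤ (log γ)²/8`, so the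
probability is at most `4 γ^{1+ε} exp (-(log γ)²/8)`, which decays faster than any power
of `γ`.
-/

open MeasureTheory ProbabilityTheory Filter Asymptotics Real Set

lemma lintegral_exp_mul_expMeasure {r t : ℝ} (hr : 0 < r) (ht : t < r) :
    ∫⁻ x, ENNReal.ofReal (exp (t * x)) ∂expMeasure r = ENNReal.ofReal (r / (r - t)) := by
  have hdensity : (fun x => exponentialPDF r x * ENNReal.ofReal (exp (t * x)))
      = (Ici 0).indicator fun x => ENNReal.ofReal (r * exp ((t - r) * x)) := by
    ext x
    rcases lt_or_ge x 0 with hx | hx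
    · simp [exponentialPDF_of_neg hx, hx]
    · rw [exponentialPDF_of_nonneg hx, indicator_of_mem (mem_Ici.2 hx),
        ← ENNReal.ofReal_mul (by positivity), mul_assoc, ← exp_add]
      ring_nf
  have hint : IntegrableOn (fun x => r * exp ((t - r) * x)) (Ioi 0) :=
    (integrableOn_exp_mul_Ioi (by linarith) 0).const_mul r
  rw [expMeasure, gammaMeasure, lintegral_withDensity_eq_lintegral_mul _
      (by exact (measurable_gammaPDFReal 1 r).ennreal_ofReal) (by fun_prop)]
  change ∫⁻ x, exponentialPDF r x * ENNReal.ofReal (exp (t * x)) = _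
  rw [hdensity, lintegral_indicator measurableSet_Ici, setLIntegral_congr Ioi_ae_eq_Ici.symm,
    ← ofReal_integral_eq_lintegral_ofReal hint (ae_of_all _ fun x => by positivity),
    integral_const_mul, integral_exp_mul_Ioi (by linarith), mul_zero, exp_zero,
    ← neg_sub r t, div_neg, neg_div, neg_neg, mul_one_div]

lemma integrable_exp_mul_expMeasure {r t : ℝ} (hr : 0 < r) (ht : t < r) :
    Integrable (fun x => exp (t * x)) (expMeasure r) := by
  refine ⟨by fun_prop, ?_⟩
  rw [hasFiniteIntegral_iff_ofReal (ae_of_all _ fun x => (exp_pos _).le),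
    lintegral_exp_mul_expMeasure hr ht]
  exact ENNReal.ofReal_lt_top

lemma mgf_id_expMeasure {r t : ℝ} (hr : 0 < r) (ht : t < r) :
    mgf id (expMeasure r) t = r / (r - t) := by
  rw [mgf, integral_eq_lintegral_of_nonneg_ae (ae_of_all _ fun x => (exp_pos _).le) (by fun_prop)]
  simp only [id_eq]
  rw [lintegral_exp_mul_expMeasure hr ht, ENNReal.toReal_ofReal (div_nonneg hr.le (by linarith))]

section ExponentialRandomVariable

variable {Ω : Type*} [MeasurableSpace Ω] {P : Measure Ω} {X : Ω → ℝ} {r t : ℝ}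

lemma integrable_exp_mul_of_map_eq_expMeasure (hX : AEMeasurable X P)
    (hmap : P.map X = expMeasure r) (hr : 0 < r) (ht : t < r) :
    Integrable (fun ω => exp (t * X ω)) P := by
  have h := integrable_exp_mul_expMeasure hr ht
  rw [← hmap, integrable_map_measure (by fun_prop) hX] at h
  exact h

lemma mgf_of_map_eq_expMeasure (hX : AEMeasurable X P)
    (hmap : P.map X = expMeasure r) (hr : 0 < r) (ht : t < r) :
    mgf X P t = r / (r - t) := by
  rw [← mgf_id_map hX, hmap, mgf_id_expMeasure hr ht]

end ExponentialRandomVariable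

lemma inv_one_sub_le_exp_two_mul {u : ℝ} (hu0 : 0 ≤ u) (hu : u ≤ 1 / 2) :
    (1 - u)⁻¹ ≤ exp (2 * u) := by
  rw [inv_le_iff_one_le_mul₀ (by linarith)]
  nlinarith [add_one_le_exp (2 * u)]

lemma measureReal_le_sup'_le_sum {Ω α β : Type*} [MeasurableSpace Ω] {P : Measure Ω}
    [IsFiniteMeasure P] [LinearOrder β] {s : Finset α} (hs : s.Nonempty) (f : α → Ω → β) (c : β) :
    P.real {ω | c ≤ s.sup' hs fun a => f a ω} ≤ ∑ a ∈ s, P.real {ω | c ≤ f a ω} := by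
  have hcover : {ω | c ≤ s.sup' hs fun a => f a ω} ⊆ ⋃ a ∈ s, {ω | c ≤ f a ω} := fun ω hω => by
    simpa using (Finset.le_sup'_iff hs).1 hω
  exact (measureReal_mono hcover (measure_ne_top _ _)).trans
    (measureReal_biUnion_finset_le _ _)

lemma le_sup'_abs_div_sub_div_iff {α : Type*} {s : Finset α} (hs : s.Nonempty) {γ a : ℝ}
    (hγ : 0 < γ) (x y : α → ℝ) :
    a ≤ s.sup' hs (fun ℓ => |x ℓ / γ - y ℓ / γ|)
      ↔ γ * a ≤ s.sup' hs (fun ℓ => |x ℓ - y ℓ|) := by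
  simp only [Finset.le_sup'_iff, div_sub_div_same, abs_div, abs_of_pos hγ, le_div_iff₀ hγ,
    mul_comm γ]

section TwoSample

variable {Ω ι : Type*} {E F : ι → Ω → ℝ}

lemma sum_sub_sum_eq_sum_disjSum (s : Finset ι) :
    (fun ω => ∑ i ∈ s, E i ω - ∑ i ∈ s, F i ω)
      = ∑ j ∈ s.disjSum s, Sum.elim E (fun i => -F i) j := by
  ext ω
  simp [Finset.sum_apply, Finset.sum_disjSum, sub_eq_add_neg]

variable [MeasurableSpace Ω] {P : Measure Ω}

lemma iIndepFun_sumElim_neg (hindep : iIndepFun (Sum.elim E F) P) :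
    iIndepFun (Sum.elim E fun i => -F i) P := by
  have h := hindep.comp (fun j => Sum.elim (fun _ => (id : ℝ → ℝ)) (fun _ => Neg.neg) j)
    (by rintro (i | i); exacts [measurable_id, measurable_neg])
  convert h using 1
  ext (i | i) ω <;> rfl

structure IndepExpPair (P : Measure Ω) (E F : ι → Ω → ℝ) : Prop where
  measurable_fst : ∀ i, Measurable (E i)
  measurable_snd : ∀ i, Measurable (F i)
  indep : iIndepFun (Sum.elim E F) P
  map_fst : ∀ i, P.map (E i) = expMeasure 1
  map_snd : ∀ i, P.map (F i) = expMeasure 1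

namespace IndepExpPair

lemma measurable_sumElim_neg (h : IndepExpPair P E F) :
    ∀ j, Measurable (Sum.elim E (fun i => -F i) j) := by
  rintro (i | i)
  exacts [h.measurable_fst i, (h.measurable_snd i).neg]

lemma integrable_exp_mul_sum_sub_sum (h : IndepExpPair P E F) {t : ℝ} (ht : |t| < 1)
    (s : Finset ι) :
    Integrable (fun ω => exp (t * (∑ i ∈ s, E i ω - ∑ i ∈ s, F i ω))) P := by
  have := h.indep.isProbabilityMeasure
  have hint := (iIndepFun_sumElim_neg h.indep).integrable_exp_mul_sum (t := t) (s := s.disjSum s)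
    h.measurable_sumElim_neg ?_
  · rwa [← sum_sub_sum_eq_sum_disjSum] at hint
  rintro (i | i) -
  · exact integrable_exp_mul_of_map_eq_expMeasure (h.measurable_fst i).aemeasurable (h.map_fst i)
      one_pos (abs_lt.1 ht).2
  · simpa only [Sum.elim_inr, Pi.neg_apply, mul_neg, neg_mul] using
      integrable_exp_mul_of_map_eq_expMeasure (t := -t) (h.measurable_snd i).aemeasurable
        (h.map_snd i) one_pos (by linarith [(abs_lt.1 ht).1])

lemma mgf_sum_sub_sum (h : IndepExpPair P E F) {t : ℝ} (ht : |t| < 1) (s : Finset ι) :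
    mgf (fun ω => ∑ i ∈ s, E i ω - ∑ i ∈ s, F i ω) P t = (1 - t ^ 2)⁻¹ ^ s.card := by
  rw [sum_sub_sum_eq_sum_disjSum,
    (iIndepFun_sumElim_neg h.indep).mgf_sum h.measurable_sumElim_neg, Finset.prod_disjSum]
  simp only [Sum.elim_inl, Sum.elim_inr]
  rw [Finset.prod_congr rfl fun i _ => mgf_of_map_eq_expMeasure
      (h.measurable_fst i).aemeasurable (h.map_fst i) one_pos (abs_lt.1 ht).2,
    Finset.prod_congr rfl fun i _ => (mgf_neg (X := F i)).trans (mgf_of_map_eq_expMeasure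
      (h.measurable_snd i).aemeasurable (h.map_snd i) one_pos (by linarith [(abs_lt.1 ht).1])),
    Finset.prod_const, Finset.prod_const, ← mul_pow, div_mul_div_comm, one_mul, one_div]
  congr 2
  ring

lemma mgf_sum_sub_sum_le (h : IndepExpPair P E F) {t : ℝ} (ht : t ^ 2 ≤ 1 / 2) (s : Finset ι) :
    mgf (fun ω => ∑ i ∈ s, E i ω - ∑ i ∈ s, F i ω) P t ≤ exp (2 * t ^ 2 * s.card) := by
  rw [h.mgf_sum_sub_sum (by rw [← sq_lt_one_iff_abs_lt_one]; linarith), mul_comm, exp_nat_mul]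
  gcongr
  · exact inv_nonneg.2 (by linarith)
  · exact inv_one_sub_le_exp_two_mul (sq_nonneg t) ht

lemma measureReal_le_abs_sum_sub_sum_le (h : IndepExpPair P E F) {t : ℝ} (ht0 : 0 ≤ t)
    (ht : t ^ 2 ≤ 1 / 2) (c : ℝ) (s : Finset ι) :
    P.real {ω | c ≤ |∑ i ∈ s, E i ω - ∑ i ∈ s, F i ω|}
      ≤ 2 * exp (-(t * c) + 2 * t ^ 2 * s.card) := by
  have := h.indep.isProbabilityMeasure
  set D := fun ω => ∑ i ∈ s, E i ω - ∑ i ∈ s, F i ω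
  have habs : |t| < 1 := by rw [← sq_lt_one_iff_abs_lt_one]; linarith
  have hupper : P.real {ω | c ≤ D ω} ≤ exp (-t * c) * mgf D P t :=
    measure_ge_le_exp_mul_mgf c ht0 (h.integrable_exp_mul_sum_sub_sum habs s)
  have hlower : P.real {ω | D ω ≤ -c} ≤ exp (-t * c) * mgf D P (-t) :=
    (measure_le_le_exp_mul_mgf (-c) (neg_nonpos.2 ht0)
      (h.integrable_exp_mul_sum_sub_sum (by rwa [abs_neg]) s)).trans_eq
      (by rw [neg_neg, neg_mul, mul_neg])
  have hsplit : {ω | c ≤ |D ω|} ⊆ {ω | c ≤ D ω} ∪ {ω | D ω ≤ -c} := fun ω hω =>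
    (le_abs'.1 (Set.mem_ofPred.1 hω)).symm
  calc P.real {ω | c ≤ |D ω|}
      ≤ P.real {ω | c ≤ D ω} + P.real {ω | D ω ≤ -c} :=
        (measureReal_mono hsplit).trans (measureReal_union_le _ _)
    _ ≤ exp (-t * c) * exp (2 * t ^ 2 * s.card)
          + exp (-t * c) * exp (2 * (-t) ^ 2 * s.card) := by
        gcongr
        · exact hupper.trans (by gcongr; exact h.mgf_sum_sub_sum_le ht s)
        · exact hlower.trans (by gcongr; exact h.mgf_sum_sub_sum_le (by rwa [neg_sq]) s)
    _ = 2 * exp (-(t * c) + 2 * t ^ 2 * s.card) := by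
        rw [neg_sq, ← exp_add, neg_mul]
        ring

end IndepExpPair

end TwoSample

lemma IndepExpPair.measureReal_le_sup'_abs_sum_sub_sum_le {Ω : Type*} [MeasurableSpace Ω]
    {P : Measure Ω} {E F : ℕ → Ω → ℝ} (h : IndepExpPair P E F) (N : ℕ) {t : ℝ} (ht0 : 0 ≤ t)
    (ht : t ^ 2 ≤ 1 / 2) (c : ℝ) :
    P.real {ω | c ≤ (Finset.range (N + 1)).sup' Finset.nonempty_range_add_one
        fun ℓ => |∑ i ∈ Finset.range ℓ, E i ω - ∑ i ∈ Finset.range ℓ, F i ω|}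
      ≤ 2 * (N + 1) * exp (-(t * c) + 2 * t ^ 2 * N) := by
  have := h.indep.isProbabilityMeasure
  have hterm : ∀ ℓ ∈ Finset.range (N + 1),
      P.real {ω | c ≤ |∑ i ∈ Finset.range ℓ, E i ω - ∑ i ∈ Finset.range ℓ, F i ω|}
        ≤ 2 * exp (-(t * c) + 2 * t ^ 2 * N) := fun ℓ hℓ => by
    refine (h.measureReal_le_abs_sum_sub_sum_le ht0 ht c _).trans ?_
    rw [Finset.card_range]
    gcongr
    exact_mod_cast Finset.mem_range_succ_iff.1 hℓ
  refine (measureReal_le_sup'_le_sum _ _ c).trans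
    ((Finset.sum_le_card_nsmul _ _ _ hterm).trans ?_)
  rw [Finset.card_range, nsmul_eq_mul, Nat.cast_succ, ← mul_assoc, mul_comm _ (2 : ℝ)]

lemma IndepExpPair.measureReal_max_deviation_le {Ω : Type*} [MeasurableSpace Ω]
    {P : Measure Ω} {E F : ℕ → Ω → ℝ} (h : IndepExpPair P E F) {γ ε : ℝ} (hγ : 1 < γ)
    (hε : 0 ≤ 1 + ε) (hlog : log γ ≤ γ ^ ((1 + ε) / 2)) :
    P.real {ω | log γ * γ ^ (-(1:ℝ)/2 + ε/2) ≤
        (Finset.range (⌊γ ^ ((1:ℝ) + ε)⌋₊ + 1)).sup' Finset.nonempty_range_add_one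
          fun ℓ => |(∑ i ∈ Finset.range ℓ, E i ω) / γ
            - (∑ i ∈ Finset.range ℓ, F i ω) / γ|}
      ≤ 4 * (γ ^ (1 + ε) * exp (-(8⁻¹ * log γ ^ 2))) := by
  set L := log γ
  set u := γ ^ ((1 + ε) / 2) with hu_def
  set N := ⌊γ ^ ((1:ℝ) + ε)⌋₊
  have hγ0 : 0 < γ := by linarith
  have hL : 0 < L := log_pos hγ
  have hu1 : 1 ≤ u := one_le_rpow hγ.le (by linarith)
  have hu0 : 0 < u := by linarith
  have hscale : γ * (L * γ ^ (-(1:ℝ)/2 + ε/2)) = L * u := by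
    rw [hu_def, show (1 + ε) / 2 = 1 + (-(1:ℝ)/2 + ε/2) by ring, rpow_add hγ0 1, rpow_one]
    ring
  have hu_sq : γ ^ (1 + ε) = u ^ 2 := by
    rw [hu_def, ← rpow_natCast, ← rpow_mul hγ0.le]
    norm_num
  have hN : (N : ℝ) ≤ u ^ 2 := hu_sq ▸ Nat.floor_le (by positivity)
  set t := L / (4 * u) with ht_def
  have ht0 : 0 ≤ t := by positivity
  have ht : t ≤ 1 / 4 := by
    rw [div_le_iff₀ (by positivity)]
    linarith
  have htc : t * (L * u) = 4⁻¹ * L ^ 2 := by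
    rw [ht_def]
    field_simp
  have htu : t ^ 2 * u ^ 2 = 16⁻¹ * L ^ 2 := by
    rw [ht_def]
    field_simp
    ring
  have hexponent : -(t * (L * u)) + 2 * t ^ 2 * N ≤ -(8⁻¹ * L ^ 2) := by
    nlinarith [mul_le_mul_of_nonneg_left hN (sq_nonneg t)]
  simp only [le_sup'_abs_div_sub_div_iff _ hγ0, hscale]
  calc _ ≤ 2 * (N + 1) * exp (-(t * (L * u)) + 2 * t ^ 2 * N) :=
        h.measureReal_le_sup'_abs_sum_sub_sum_le N ht0 (by nlinarith) _
    _ ≤ 2 * (2 * u ^ 2) * exp (-(8⁻¹ * L ^ 2)) := by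
        gcongr
        nlinarith
    _ = 4 * (γ ^ (1 + ε) * exp (-(8⁻¹ * L ^ 2))) := by
        rw [hu_sq]
        ring

lemma isLittleO_rpow_mul_exp_neg_mul_log_sq {a : ℝ} (ha : 0 < a) (p q : ℝ) :
    (fun x : ℝ => x ^ p * exp (-(a * log x ^ 2))) =o[atTop] fun x => x ^ q := by
  have hquadratic : Tendsto (fun L : ℝ => L * ((p - q) - a * L)) atTop atBot := by
    refine tendsto_id.atTop_mul_atBot₀ ?_
    simpa [sub_eq_add_neg] using
      tendsto_atBot_add_const_left _ (p - q) (tendsto_neg_atTop_atBot.comp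
        (tendsto_id.const_mul_atTop ha))
  rw [isLittleO_iff_tendsto' ((eventually_gt_atTop 0).mono fun x hx h0 =>
    absurd h0 (rpow_pos_of_pos hx q).ne')]
  refine (tendsto_exp_atBot.comp (hquadratic.comp tendsto_log_atTop)).congr' ?_
  filter_upwards [eventually_gt_atTop 0] with x hx
  rw [Function.comp_apply, Function.comp_apply, rpow_def_of_pos hx, rpow_def_of_pos hx,
    ← exp_add, ← exp_sub]
  ring_nf

theorem poisson_grids_max_deviation_littleO_general
    {Ω : Type*} [MeasurableSpace Ω] (P : Measure Ω)
    (E F : ℕ → Ω → ℝ)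
    (hEmeas : ∀ i, Measurable (E i)) (hFmeas : ∀ i, Measurable (F i))
    -- the joint family (E_i, F_i) is independent (E's independent of F's)
    (hindep : iIndepFun (Sum.elim E F) P)
    -- each variable is exponential with rate 1
    (hEexp : ∀ i, P.map (E i) = expMeasure 1)
    (hFexp : ∀ i, P.map (F i) = expMeasure 1)
    (q ε : ℝ) (hε : 0 < ε) :
    ∃ α : ℝ, 0 < α ∧
      (fun γ : ℝ =>
        (P {ω |
          α * Real.log γ * γ ^ (-(1:ℝ)/2 + ε/2) ≤
            -- max over 0 ≤ ℓ ≤ ⌊γ^{1+ε}⌋ of |χ^{(γ)}_ℓ − θ^{(γ)}_ℓ|, where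
            -- χ^{(γ)}_ℓ = (E_1 + ⋯ + E_ℓ)/γ, θ^{(γ)}_ℓ = (F_1 + ⋯ + F_ℓ)/γ
            -- (the ℓ = 0 term vanishes since χ^{(γ)}_0 = θ^{(γ)}_0 = 0)
            (Finset.range (⌊γ ^ ((1:ℝ) + ε)⌋₊ + 1)).sup' Finset.nonempty_range_add_one
              (fun ℓ =>
                |(∑ i ∈ Finset.range ℓ, E i ω) / γ -
                  (∑ i ∈ Finset.range ℓ, F i ω) / γ|)}).toReal)
      =o[atTop] fun γ : ℝ => γ ^ (-q) := by
  have h : IndepExpPair P E F := ⟨hEmeas, hFmeas, hindep, hEexp, hFexp⟩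
  refine ⟨1, one_pos, ?_⟩
  simp only [one_mul]
  refine IsBigO.trans_isLittleO (g := fun γ => 4 * (γ ^ (1 + ε) * exp (-(8⁻¹ * log γ ^ 2))))
    ?_ ((isLittleO_rpow_mul_exp_neg_mul_log_sq (by norm_num) _ _).const_mul_left 4)
  refine IsBigO.of_bound 1 ?_
  filter_upwards [eventually_gt_atTop 1,
    (isLittleO_log_rpow_atTop (r := (1 + ε) / 2) (by linarith)).eventuallyLE] with γ hγ hlog
  rw [norm_of_nonneg ENNReal.toReal_nonneg, one_mul, norm_of_nonneg (by positivity)]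
  exact h.measureReal_max_deviation_le hγ (by linarith)
    ((le_abs_self _).trans (hlog.trans_eq (norm_of_nonneg (by positivity))))

theorem poisson_grids_max_deviation_littleO
    {Ω : Type*} [MeasurableSpace Ω] (P : Measure Ω) [IsProbabilityMeasure P]
    (E F : ℕ → Ω → ℝ)
    (hEmeas : ∀ i, Measurable (E i)) (hFmeas : ∀ i, Measurable (F i))
    -- the joint family (E_i, F_i) is independent (E's independent of F's)
    (hindep : iIndepFun (Sum.elim E F) P)
    -- each variable is exponential with rate 1
    (hEexp : ∀ i, P.map (E i) = expMeasure 1)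
    (hFexp : ∀ i, P.map (F i) = expMeasure 1)
    (q ε : ℝ) (hq : 0 < q) (hε : 0 < ε) :
    ∃ α : ℝ, 0 < α ∧
      (fun γ : ℝ =>
        (P {ω |
          α * Real.log γ * γ ^ (-(1:ℝ)/2 + ε/2) ≤
            -- max over 0 ≤ ℓ ≤ ⌊γ^{1+ε}⌋ of |χ^{(γ)}_ℓ − θ^{(γ)}_ℓ|, where
            -- χ^{(γ)}_ℓ = (E_1 + ⋯ + E_ℓ)/γ, θ^{(γ)}_ℓ = (F_1 + ⋯ + F_ℓ)/γ
            -- (the ℓ = 0 term vanishes since χ^{(γ)}_0 = θ^{(γ)}_0 = 0)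
            (Finset.range (⌊γ ^ ((1:ℝ) + ε)⌋₊ + 1)).sup' Finset.nonempty_range_add_one
              (fun ℓ =>
                |(∑ i ∈ Finset.range ℓ, E i ω) / γ -
                  (∑ i ∈ Finset.range ℓ, F i ω) / γ|)}).toReal)
      =o[atTop] fun γ : ℝ => γ ^ (-q) :=
  poisson_grids_max_deviation_littleO_general P E F hEmeas hFmeas hindep hEexp hFexp q ε hε
end
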